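/- For the LATT weight, E[α(W)|W_s] = α_s(W_s): with Z Bernoulli, π(X,A) = E[Z|X,A] ∈ (0,1), π_s(X) = E[Z|X] ∈ (0,1), one has E[Z - (1-Z)·π(X,A)/(1-π(X,A)) | Z, X] = Z - (1-Z)·π_s(X)/(1-π_s(X)) a.s. -/

import Mathlib

/-!
Write `α = Z - w_{XA}` and `α_s = Z - w_X`, where `w_m = (1 - Z) p / (1 - p)` with `p = E[Z | m]`.
Pulling the `m`-measurable odds `p / (1 - p)` out of the conditional expectation gives
`E[w_m | m] = p / (1 - p) · (1 - p) = p = E[Z | m]`; the same computation for lower integrals,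
done through `withDensity`, shows first that `w_m` is integrable. Since `Z` takes only the values
`0` and `1`, a conditional expectation given `σ(Z) ⊔ σ(X)` is pinned down by the integrals of
`Z f` and `(1 - Z) f` over `σ(X)`-sets. There `Z α = Z = Z α_s`, while `(1 - Z) α = -w_{XA}` and
`(1 - Z) α_s = -w_X` both integrate to `-∫ Z` because `σ(X) ≤ σ(X, A)`.
-/

open MeasureTheory Set
open scoped ENNReal

section

variable {Ω : Type*} {m m₀ : MeasurableSpace Ω} {μ : Measure Ω}

theorem lintegral_mul_eq_of_forall_setLIntegral_eq (hm : m ≤ m₀) {f g F : Ω → ℝ≥0∞}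
    (hf : AEMeasurable f μ) (hg : AEMeasurable g μ) (hF : Measurable[m] F)
    (hfg : ∀ s, MeasurableSet[m] s → ∫⁻ x in s, f x ∂μ = ∫⁻ x in s, g x ∂μ) :
    ∫⁻ x, f x * F x ∂μ = ∫⁻ x, g x * F x ∂μ := by
  have htrim : (μ.withDensity f).trim hm = (μ.withDensity g).trim hm := by
    refine @Measure.ext _ m _ _ fun s hs => ?_
    rw [trim_measurableSet_eq hm hs, trim_measurableSet_eq hm hs,
      withDensity_apply _ (hm s hs), withDensity_apply _ (hm s hs), hfg s hs]
  have hF₀ : AEMeasurable F μ := (hF.mono hm le_rfl).aemeasurable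
  calc ∫⁻ x, f x * F x ∂μ = ∫⁻ x, F x ∂(μ.withDensity f).trim hm := by
        rw [lintegral_trim hm hF, lintegral_withDensity_eq_lintegral_mul₀ hf hF₀]; rfl
    _ = ∫⁻ x, g x * F x ∂μ := by
        rw [htrim, lintegral_trim hm hF, lintegral_withDensity_eq_lintegral_mul₀ hg hF₀]; rfl

theorem MeasurableSpace.sup_eq_generateFrom_image2_inter (m₁ m₂ : MeasurableSpace Ω) :
    m₁ ⊔ m₂ =
      generateFrom (image2 (· ∩ ·) {s | MeasurableSet[m₁] s} {t | MeasurableSet[m₂] t}) := by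
  refine le_antisymm (sup_le ?_ ?_) (generateFrom_le ?_)
  · exact fun s hs => measurableSet_generateFrom ⟨s, hs, univ, .univ, inter_univ s⟩
  · exact fun t ht => measurableSet_generateFrom ⟨univ, .univ, t, ht, univ_inter t⟩
  · rintro _ ⟨s, hs, t, ht, rfl⟩
    exact (le_sup_left (b := m₂) s hs).inter (le_sup_right (a := m₁) t ht)

theorem isPiSystem_image2_inter (m₁ m₂ : MeasurableSpace Ω) :
    IsPiSystem (image2 (· ∩ ·) {s | MeasurableSet[m₁] s} {t | MeasurableSet[m₂] t}) := by
  rintro _ ⟨s₁, hs₁, t₁, ht₁, rfl⟩ _ ⟨s₂, hs₂, t₂, ht₂, rfl⟩ -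
  exact ⟨s₁ ∩ s₂, hs₁.inter hs₂, t₁ ∩ t₂, ht₁.inter ht₂, (inter_inter_inter_comm s₁ t₁ s₂ t₂).symm⟩

theorem setIntegral_eq_of_isPiSystem {C : Set (Set Ω)} (hm : m ≤ m₀)
    (hgen : m = MeasurableSpace.generateFrom C) (hC : IsPiSystem C) {f g : Ω → ℝ}
    (hf : Integrable f μ) (hg : Integrable g μ) (huniv : ∫ x, f x ∂μ = ∫ x, g x ∂μ)
    (heq : ∀ s ∈ C, ∫ x in s, f x ∂μ = ∫ x in s, g x ∂μ) {s : Set Ω}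
    (hs : MeasurableSet[m] s) : ∫ x in s, f x ∂μ = ∫ x in s, g x ∂μ := by
  induction s, hs using MeasurableSpace.induction_on_inter hgen hC with
  | empty => simp
  | basic s hs => exact heq s hs
  | compl s hs ih =>
    have hf' := integral_add_compl (hm s hs) hf
    have hg' := integral_add_compl (hm s hs) hg
    linarith
  | iUnion s hdisj hs ih =>
    rw [integral_iUnion (fun i => hm _ (hs i)) hdisj hf.integrableOn,
      integral_iUnion (fun i => hm _ (hs i)) hdisj hg.integrableOn]
    exact tsum_congr ih

theorem setIntegral_preimage_inter_eq {Z f : Ω → ℝ} (hZ : Measurable Z)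
    (hZ01 : ∀ᵐ ω ∂μ, Z ω = 0 ∨ Z ω = 1) (hf : Integrable f μ) {B : Set ℝ}
    (hB : MeasurableSet B) (T : Set Ω) :
    ∫ ω in Z ⁻¹' B ∩ T, f ω ∂μ = B.indicator 1 1 * ∫ ω in T, Z ω * f ω ∂μ
      + B.indicator 1 0 * ∫ ω in T, (1 - Z ω) * f ω ∂μ := by
  have hZf : Integrable (fun ω => Z ω * f ω) μ :=
    hf.bdd_mul hZ.aestronglyMeasurable (c := 1) <| hZ01.mono fun ω h => by
      rcases h with h | h <;> simp [h]
  have h1Zf : Integrable (fun ω => (1 - Z ω) * f ω) μ :=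
    hf.bdd_mul (aestronglyMeasurable_const.sub hZ.aestronglyMeasurable) (c := 1) <|
      hZ01.mono fun ω h => by rcases h with h | h <;> simp [h]
  have hind : ∀ᵐ ω ∂μ, (Z ⁻¹' B).indicator f ω
      = B.indicator 1 1 * (Z ω * f ω) + B.indicator 1 0 * ((1 - Z ω) * f ω) := by
    filter_upwards [hZ01] with ω hω
    rcases hω with h | h <;> by_cases hB0 : (0 : ℝ) ∈ B <;> by_cases hB1 : (1 : ℝ) ∈ B <;>
      simp [indicator, h, hB0, hB1]
  rw [inter_comm, ← setIntegral_indicator (hZ hB), integral_congr_ae (ae_restrict_of_ae hind),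
    integral_add (hZf.const_mul _).integrableOn (h1Zf.const_mul _).integrableOn,
    integral_const_mul, integral_const_mul]

theorem ae_eq_condExp_comap_sup_of_setIntegral_mul_eq [IsFiniteMeasure μ] {Z f g : Ω → ℝ}
    (hm : m ≤ m₀) (hZ : Measurable Z) (hZ01 : ∀ᵐ ω ∂μ, Z ω = 0 ∨ Z ω = 1)
    (hf : Integrable f μ) (hg : Integrable g μ)
    (hgm : StronglyMeasurable[MeasurableSpace.comap Z (borel ℝ) ⊔ m] g)
    (hZg : ∀ T, MeasurableSet[m] T → ∫ ω in T, Z ω * g ω ∂μ = ∫ ω in T, Z ω * f ω ∂μ)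
    (h1Zg : ∀ T, MeasurableSet[m] T →
      ∫ ω in T, (1 - Z ω) * g ω ∂μ = ∫ ω in T, (1 - Z ω) * f ω ∂μ) :
    g =ᵐ[μ] μ[f | MeasurableSpace.comap Z (borel ℝ) ⊔ m] := by
  have hle : MeasurableSpace.comap Z (borel ℝ) ⊔ m ≤ m₀ := sup_le hZ.comap_le hm
  have hbasic : ∀ B T, MeasurableSet B → MeasurableSet[m] T →
      ∫ ω in Z ⁻¹' B ∩ T, g ω ∂μ = ∫ ω in Z ⁻¹' B ∩ T, f ω ∂μ := fun B T hB hT => by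
    rw [setIntegral_preimage_inter_eq hZ hZ01 hg hB, setIntegral_preimage_inter_eq hZ hZ01 hf hB,
      hZg T hT, h1Zg T hT]
  refine ae_eq_condExp_of_forall_setIntegral_eq hle hf (fun s _ _ => hg.integrableOn)
    (fun s hs _ => ?_) hgm.aestronglyMeasurable
  refine setIntegral_eq_of_isPiSystem hle (MeasurableSpace.sup_eq_generateFrom_image2_inter _ _)
    (isPiSystem_image2_inter _ _) hg hf ?_ ?_ hs
  · simpa using hbasic univ univ .univ .univ
  · rintro _ ⟨_, ⟨B, hB, rfl⟩, T, hT, rfl⟩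
    exact hbasic B T hB hT

noncomputable def oddsWeight {m₀ : MeasurableSpace Ω} (μ : Measure Ω) (m : MeasurableSpace Ω)
    (Z : Ω → ℝ) (ω : Ω) : ℝ :=
  (1 - Z ω) * μ[Z | m] ω / (1 - μ[Z | m] ω)

theorem measurable_odds_condExp {Z : Ω → ℝ} :
    Measurable[m] fun ω => μ[Z | m] ω / (1 - μ[Z | m] ω) :=
  have hp : Measurable[m] μ[Z | m] := stronglyMeasurable_condExp.measurable
  hp.div (measurable_const.sub hp)

section oddsWeight

variable [IsFiniteMeasure μ] {Z : Ω → ℝ}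

theorem condExp_one_sub (hm : m ≤ m₀) (hZ : Integrable Z μ) :
    μ[fun ω => 1 - Z ω | m] =ᵐ[μ] fun ω => 1 - μ[Z | m] ω :=
  (condExp_sub (integrable_const 1) hZ m).trans (by rw [condExp_const hm]; rfl)

variable (hm : m ≤ m₀) (hZ : Integrable Z μ) (hZ1 : ∀ᵐ ω ∂μ, Z ω ≤ 1)
  (hp : ∀ᵐ ω ∂μ, μ[Z | m] ω ∈ Ico 0 1)
include hm hZ hZ1 hp

theorem integrable_oddsWeight : Integrable (oddsWeight μ m Z) μ := by
  set p := μ[Z | m]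
  have hodds : Measurable[m] fun ω => p ω / (1 - p ω) := measurable_odds_condExp
  have h1Z : Integrable (fun ω => 1 - Z ω) μ := (integrable_const 1).sub hZ
  have h1p : Integrable (fun ω => 1 - p ω) μ := (integrable_const 1).sub integrable_condExp
  have hset : ∀ s, MeasurableSet[m] s →
      ∫⁻ ω in s, .ofReal (1 - Z ω) ∂μ = ∫⁻ ω in s, .ofReal (1 - p ω) ∂μ := fun s hs => by
    rw [← ofReal_integral_eq_lintegral_ofReal h1Z.integrableOn
        (ae_restrict_of_ae (hZ1.mono fun _ => sub_nonneg.2)),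
      ← ofReal_integral_eq_lintegral_ofReal h1p.integrableOn
        (ae_restrict_of_ae (hp.mono fun _ h => sub_nonneg.2 h.2.le)),
      ← setIntegral_condExp hm h1Z hs,
      integral_congr_ae (ae_restrict_of_ae (condExp_one_sub hm hZ))]
  have hlin : ∫⁻ ω, .ofReal (oddsWeight μ m Z ω) ∂μ = ∫⁻ ω, .ofReal (p ω) ∂μ :=
    calc ∫⁻ ω, .ofReal (oddsWeight μ m Z ω) ∂μ
        = ∫⁻ ω, .ofReal (1 - Z ω) * .ofReal (p ω / (1 - p ω)) ∂μ :=
          lintegral_congr_ae <| hZ1.mono fun ω h => by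
            dsimp only [oddsWeight]
            rw [mul_div_assoc, ENNReal.ofReal_mul (sub_nonneg.2 h)]
      _ = ∫⁻ ω, .ofReal (1 - p ω) * .ofReal (p ω / (1 - p ω)) ∂μ :=
          lintegral_mul_eq_of_forall_setLIntegral_eq hm h1Z.1.aemeasurable.ennreal_ofReal
            h1p.1.aemeasurable.ennreal_ofReal hodds.ennreal_ofReal hset
      _ = ∫⁻ ω, .ofReal (p ω) ∂μ := lintegral_congr_ae <| hp.mono fun ω h => by
          dsimp only
          rw [← ENNReal.ofReal_mul (sub_nonneg.2 h.2.le), mul_div_cancel₀ _ (sub_ne_zero.2 h.2.ne')]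
  have hpm : AEMeasurable p μ := integrable_condExp.1.aemeasurable
  refine ⟨(((aemeasurable_const.sub hZ.1.aemeasurable).mul hpm).div
      (aemeasurable_const.sub hpm)).aestronglyMeasurable,
    (hasFiniteIntegral_iff_ofReal ?_).2 (hlin ▸ integrable_condExp.lintegral_lt_top)⟩
  filter_upwards [hZ1, hp] with ω h1 h2
  exact div_nonneg (mul_nonneg (sub_nonneg.2 h1) h2.1) (sub_nonneg.2 h2.2.le)

theorem condExp_oddsWeight : μ[oddsWeight μ m Z | m] =ᵐ[μ] μ[Z | m] := by
  have hw := integrable_oddsWeight hm hZ hZ1 hp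
  have heq : oddsWeight μ m Z
      = (fun ω => μ[Z | m] ω / (1 - μ[Z | m] ω)) * fun ω => 1 - Z ω :=
    funext fun _ => by rw [oddsWeight, mul_div_assoc, mul_comm]; rfl
  rw [heq] at hw ⊢
  filter_upwards [condExp_mul_of_stronglyMeasurable_left measurable_odds_condExp.stronglyMeasurable
    hw ((integrable_const 1).sub hZ), condExp_one_sub hm hZ, hp] with ω hmul h1Z hpω
  rw [hmul, Pi.mul_apply, h1Z, div_mul_cancel₀ _ (sub_ne_zero.2 hpω.2.ne')]

theorem setIntegral_oddsWeight {T : Set Ω} (hT : MeasurableSet[m] T) :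
    ∫ ω in T, oddsWeight μ m Z ω ∂μ = ∫ ω in T, Z ω ∂μ := by
  rw [← setIntegral_condExp hm (integrable_oddsWeight hm hZ hZ1 hp) hT,
    integral_congr_ae (ae_restrict_of_ae (condExp_oddsWeight hm hZ hZ1 hp)),
    setIntegral_condExp hm hZ hT]

end oddsWeight

theorem measurable_oddsWeight {m' : MeasurableSpace Ω} {Z : Ω → ℝ} (hm : m ≤ m')
    (hZ : Measurable[m'] Z) : Measurable[m'] (oddsWeight μ m Z) :=
  have hp : Measurable[m'] μ[Z | m] := stronglyMeasurable_condExp.measurable.mono hm le_rfl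
  ((measurable_const.sub hZ).mul hp).div (measurable_const.sub hp)

theorem mul_sub_oddsWeight_ae_eq {Z : Ω → ℝ} (hZ01 : ∀ᵐ ω ∂μ, Z ω = 0 ∨ Z ω = 1) :
    (fun ω => Z ω * (Z ω - oddsWeight μ m Z ω)) =ᵐ[μ] Z :=
  hZ01.mono fun ω h => by rcases h with h | h <;> simp [oddsWeight, h]

theorem one_sub_mul_sub_oddsWeight_ae_eq {Z : Ω → ℝ}
    (hZ01 : ∀ᵐ ω ∂μ, Z ω = 0 ∨ Z ω = 1) :
    (fun ω => (1 - Z ω) * (Z ω - oddsWeight μ m Z ω)) =ᵐ[μ] fun ω => -oddsWeight μ m Z ω :=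
  hZ01.mono fun ω h => by rcases h with h | h <;> simp [oddsWeight, h]

end

theorem stmt_14_general {Ω : Type*} {m0 : MeasurableSpace Ω} (μ : Measure Ω) [IsProbabilityMeasure μ]
    (Z : Ω → ℝ) (hZmeas : Measurable Z) (hZ01 : ∀ᵐ ω ∂μ, Z ω = 0 ∨ Z ω = 1)
    {mX mXA : MeasurableSpace Ω} (hmX : mX ≤ mXA) (hmXA : mXA ≤ m0)
    (hπ : ∀ᵐ ω ∂μ, 0 < (μ[Z|mXA]) ω ∧ (μ[Z|mXA]) ω < 1)
    (hπs : ∀ᵐ ω ∂μ, 0 < (μ[Z|mX]) ω ∧ (μ[Z|mX]) ω < 1)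
    (mZX : MeasurableSpace Ω)
    (hmZX : mZX = MeasurableSpace.comap Z (borel ℝ) ⊔ mX) :
    μ[(fun ω => Z ω - (1 - Z ω) * (μ[Z|mXA]) ω / (1 - (μ[Z|mXA]) ω)) | mZX] =ᵐ[μ]
      fun ω => Z ω - (1 - Z ω) * (μ[Z|mX]) ω / (1 - (μ[Z|mX]) ω) := by
  subst hmZX
  have hmX₀ : mX ≤ m0 := hmX.trans hmXA
  have hZ : Integrable Z μ := .of_bound hZmeas.aestronglyMeasurable 1 <| hZ01.mono fun ω h => by
    rcases h with h | h <;> simp [h]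
  have hZ1 : ∀ᵐ ω ∂μ, Z ω ≤ 1 := hZ01.mono fun ω h => by rcases h with h | h <;> simp [h]
  have hπ' : ∀ᵐ ω ∂μ, μ[Z | mXA] ω ∈ Ico 0 1 := hπ.mono fun _ h => ⟨h.1.le, h.2⟩
  have hπs' : ∀ᵐ ω ∂μ, μ[Z | mX] ω ∈ Ico 0 1 := hπs.mono fun _ h => ⟨h.1.le, h.2⟩
  have hZX : Measurable[MeasurableSpace.comap Z (borel ℝ) ⊔ mX] Z :=
    (comap_measurable Z).mono le_sup_left le_rfl
  refine (ae_eq_condExp_comap_sup_of_setIntegral_mul_eq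
    (f := fun ω => Z ω - oddsWeight μ mXA Z ω) (g := fun ω => Z ω - oddsWeight μ mX Z ω)
    hmX₀ hZmeas hZ01 (hZ.sub (integrable_oddsWeight hmXA hZ hZ1 hπ'))
    (hZ.sub (integrable_oddsWeight hmX₀ hZ hZ1 hπs'))
    (hZX.sub (measurable_oddsWeight le_sup_right hZX)).stronglyMeasurable
    (fun T _ => ?_) (fun T hT => ?_)).symm
  · rw [integral_congr_ae (ae_restrict_of_ae (mul_sub_oddsWeight_ae_eq hZ01)),
      integral_congr_ae (ae_restrict_of_ae (mul_sub_oddsWeight_ae_eq hZ01))]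
  · rw [integral_congr_ae (ae_restrict_of_ae (one_sub_mul_sub_oddsWeight_ae_eq hZ01)),
      integral_congr_ae (ae_restrict_of_ae (one_sub_mul_sub_oddsWeight_ae_eq hZ01)),
      integral_neg, integral_neg, setIntegral_oddsWeight hmX₀ hZ hZ1 hπs' hT,
      setIntegral_oddsWeight hmXA hZ hZ1 hπ' (hmX T hT)]

/-- For the LATT weight, E[α(W)|W_s] = α_s(W_s):
E[Z - (1-Z)π/(1-π) | σ(Z,X)] = Z - (1-Z)π_s/(1-π_s) a.s. -/
theorem stmt_14 {Ω : Type*} {m0 : MeasurableSpace Ω} (μ : Measure Ω) [IsProbabilityMeasure μ]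
    (Z : Ω → ℝ) (hZmeas : Measurable Z) (hZ01 : ∀ᵐ ω ∂μ, Z ω = 0 ∨ Z ω = 1)
    {mX mXA : MeasurableSpace Ω} (hmX : mX ≤ mXA) (hmXA : mXA ≤ m0)
    (hπ : ∀ᵐ ω ∂μ, 0 < (μ[Z|mXA]) ω ∧ (μ[Z|mXA]) ω < 1)
    (hπs : ∀ᵐ ω ∂μ, 0 < (μ[Z|mX]) ω ∧ (μ[Z|mX]) ω < 1)
    (mZX : MeasurableSpace Ω)
    (hmZX : mZX = MeasurableSpace.comap Z (borel ℝ) ⊔ mX) (hmZXle : mZX ≤ m0) :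
    μ[(fun ω => Z ω - (1 - Z ω) * (μ[Z|mXA]) ω / (1 - (μ[Z|mXA]) ω)) | mZX] =ᵐ[μ]
      fun ω => Z ω - (1 - Z ω) * (μ[Z|mX]) ω / (1 - (μ[Z|mX]) ω) :=
  stmt_14_general μ Z hZmeas hZ01 hmX hmXA hπ hπs mZX hmZX
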